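/- arXiv:1309.4033 — 6 statements merged into one kernel-verified Lean document; each statement's English description precedes it below -/
import Mathlib

section
/- If H is a graph and σ is an automorphism of H of order 2 (an involution), then for any graph G, the number of homomorphisms from G to H is congruent modulo 2 to the number of homomorphisms from G to H^σ, the subgraph of H induced by the fixed points of σ. -/
structure LoopGraph (V : Type) where
  Adj : V → V → Prop
  symm : ∀ u v, Adj u v → Adj v u

def LoopGraph.IsHom {V W : Type} (G : LoopGraph V) (H : LoopGraph W) (f : V → W) : Prop :=
  ∀ u v, G.Adj u v → H.Adj (f u) (f v)

noncomputable def homCount {V W : Type} (G : LoopGraph V) (H : LoopGraph W) : ℕ :=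
  Nat.card {f : V → W // G.IsHom H f}

def LoopGraph.IsAut {V : Type} (H : LoopGraph V) (σ : Equiv.Perm V) : Prop :=
  ∀ u v, H.Adj u v ↔ H.Adj (σ u) (σ v)

def LoopGraph.fixedSubgraph {V : Type} (H : LoopGraph V) (σ : Equiv.Perm V) :
    LoopGraph {v : V // σ v = v} :=
  ⟨fun u v => H.Adj u v, fun u v h => H.symm u v h⟩

/-!
Postcomposition with an automorphism `σ` of `H` permutes the homomorphisms `G → H`, and its
fixed points are exactly the homomorphisms into `H^σ`. If `σ ^ p ^ n = 1`, every other orbit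
has size divisible by `p`, so the two counts agree modulo `p`.
-/

namespace LoopGraph

variable {U V : Type} {G : LoopGraph U} {H : LoopGraph V} {σ : Equiv.Perm V}

theorem IsAut.isHom_comp (hσ : H.IsAut σ) {f : U → V} (hf : G.IsHom H f) :
    G.IsHom H (σ ∘ f) :=
  fun u v huv => (hσ _ _).mp (hf u v huv)

def IsAut.postcomp (hσ : H.IsAut σ) (G : LoopGraph U) :
    Function.End {f : U → V // G.IsHom H f} :=
  fun f => ⟨σ ∘ f.1, hσ.isHom_comp f.2⟩

theorem IsAut.postcomp_pow_apply (hσ : H.IsAut σ) (n : ℕ) (f : {f : U → V // G.IsHom H f}) :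
    ((hσ.postcomp G ^ n) f).1 = ⇑(σ ^ n) ∘ f.1 := by
  induction n generalizing f with
  | zero => rfl
  | succ n ih => exact ih (hσ.postcomp G f)

theorem IsAut.postcomp_pow_eq_one (hσ : H.IsAut σ) {n : ℕ} (hn : σ ^ n = 1) :
    hσ.postcomp G ^ n = 1 := by
  funext f
  apply Subtype.ext
  rw [hσ.postcomp_pow_apply, hn]
  rfl

def IsAut.fixedPointsPostcompEquiv (hσ : H.IsAut σ) :
    Function.fixedPoints (hσ.postcomp G) ≃
      {g : U → {v : V // σ v = v} // G.IsHom (H.fixedSubgraph σ) g} where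
  toFun f := ⟨fun u => ⟨f.1.1 u, congrFun (congrArg Subtype.val f.2) u⟩,
    fun u v huv => f.1.2 u v huv⟩
  invFun g := ⟨⟨fun u => (g.1 u).1, fun u v huv => g.2 u v huv⟩,
    Subtype.ext (funext fun u => (g.1 u).2)⟩
  left_inv _ := rfl
  right_inv _ := rfl

theorem homCount_modEq_homCount_fixedSubgraph [Finite U] [Finite V] {p n : ℕ} [Fact p.Prime]
    (hσ : H.IsAut σ) (hσp : σ ^ p ^ n = 1) :
    homCount G H ≡ homCount G (H.fixedSubgraph σ) [MOD p] := by
  classical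
  have := Fintype.ofFinite {f : U → V // G.IsHom H f}
  have key := Equiv.Perm.card_fixedPoints_modEq (hσ.postcomp_pow_eq_one (G := G) hσp)
  rwa [Fintype.card_eq_nat_card, Fintype.card_eq_nat_card,
    Nat.card_congr hσ.fixedPointsPostcompEquiv] at key

end LoopGraph

/-- If σ is an involution (automorphism of order 2) of H, then for any graph G the
number of homomorphisms from G to H is congruent mod 2 to the number of
homomorphisms from G to the fixed-point subgraph H^σ. -/
theorem stmt0 {V : Type} [Fintype V] (H : LoopGraph V)
    (σ : Equiv.Perm V) (hσ : H.IsAut σ) (hord : orderOf σ = 2)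
    {U : Type} [Fintype U] (G : LoopGraph U) :
    homCount G H ≡ homCount G (H.fixedSubgraph σ) [MOD 2] := by
  exact LoopGraph.homCount_modEq_homCount_fixedSubgraph (G := G) (n := 1) hσ
    (by rw [pow_one, ← hord, pow_orderOf_eq_one])
end

section
/- Given a graph G and a prime p, there is, up to isomorphism, exactly one graph G* such that G* has no automorphisms of order p and G reduces to G* by a sequence of steps, each replacing a graph by the fixed-point subgraph of one of its order-p automorphisms. -/
/-!
A reduction by an automorphism `σ` of order `p` can be continued to the fixed points of any
`p`-subgroup `S ≥ ⟨σ⟩` of `Aut G`: in a `p`-group every proper subgroup `R` is normalized by some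
`y ∉ R` with `y ^ p ∈ R`, and `y` then acts on the fixed points of `R` with order `1` or `p`, the
fixed points of that action being those of `R ⊔ ⟨y⟩`. Taking `S` to be a Sylow subgroup, and
using that all Sylow subgroups are conjugate in `Aut G`, every one-step reduct of `G` reduces to
one and the same graph. So any two reduction paths out of `G` can be joined, and uniqueness of
the reduced form follows by induction on the number of vertices.
-/

structure FGraph where
  V : Type
  fin : Fintype V
  Adj : V → V → Prop
  symm : ∀ u v, Adj u v → Adj v u

def FGraph.IsAut (H : FGraph) (σ : Equiv.Perm H.V) : Prop :=
  ∀ u v, H.Adj u v ↔ H.Adj (σ u) (σ v)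

/-- The induced subgraph on the fixed points of an automorphism. -/
noncomputable def FGraph.fixedSubgraph (H : FGraph) (σ : Equiv.Perm H.V) : FGraph where
  V := {v : H.V // σ v = v}
  fin := by classical exact @Subtype.fintype _ _ (Classical.decPred _) H.fin
  Adj := fun u v => H.Adj u v
  symm := fun u v h => H.symm u v h

/-- Isomorphism of (bundled) graphs. -/
def FGraph.Iso (G H : FGraph) : Prop :=
  ∃ e : G.V ≃ H.V, ∀ u v, G.Adj u v ↔ H.Adj (e u) (e v)

/-- One reduction step: H →_p K iff K is (isomorphic to) the fixed-point subgraph of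
an order-p automorphism of H. -/
def ReduceStep (p : ℕ) (H K : FGraph) : Prop :=
  ∃ σ : Equiv.Perm H.V, H.IsAut σ ∧ orderOf σ = p ∧ K.Iso (H.fixedSubgraph σ)


attribute [instance] FGraph.fin

open Equiv Subgroup MulAction

namespace FGraph

theorem Iso.refl (G : FGraph) : G.Iso G := ⟨Equiv.refl _, fun _ _ => Iff.rfl⟩

theorem Iso.symm {G H : FGraph} (h : G.Iso H) : H.Iso G := by
  obtain ⟨e, he⟩ := h
  exact ⟨e.symm, fun u v => by simpa using (he (e.symm u) (e.symm v)).symm⟩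

theorem Iso.trans {G H K : FGraph} (h₁ : G.Iso H) (h₂ : H.Iso K) : G.Iso K := by
  obtain ⟨e, he⟩ := h₁
  obtain ⟨f, hf⟩ := h₂
  exact ⟨e.trans f, fun u v => (he u v).trans (hf _ _)⟩

noncomputable def induce (G : FGraph) (P : G.V → Prop) : FGraph where
  V := {v // P v}
  fin := @Subtype.fintype _ _ (Classical.decPred _) G.fin
  Adj u v := G.Adj u v
  symm u v h := G.symm u v h

theorem induce_iso_induce {G H : FGraph} (e : G.V ≃ H.V)
    (he : ∀ u v, G.Adj u v ↔ H.Adj (e u) (e v)) {P : G.V → Prop} {Q : H.V → Prop}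
    (hPQ : ∀ v, P v ↔ Q (e v)) : (G.induce P).Iso (H.induce Q) :=
  ⟨e.subtypeEquiv hPQ, fun u v => he u.1 v.1⟩

theorem induce_congr (G : FGraph) {P Q : G.V → Prop} (hPQ : ∀ v, P v ↔ Q v) :
    (G.induce P).Iso (G.induce Q) :=
  induce_iso_induce (Equiv.refl _) (fun _ _ => Iff.rfl) hPQ

theorem induce_iso_self (G : FGraph) {P : G.V → Prop} (hP : ∀ v, P v) : (G.induce P).Iso G :=
  ⟨Equiv.subtypeUnivEquiv hP, fun _ _ => Iff.rfl⟩

theorem induce_induce_iso (G : FGraph) {P : G.V → Prop} {Q : (G.induce P).V → Prop}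
    {R : G.V → Prop} (hR : ∀ v, (∃ h : P v, Q ⟨v, h⟩) ↔ R v) :
    ((G.induce P).induce Q).Iso (G.induce R) :=
  ⟨(Equiv.subtypeSubtypeEquivSubtypeExists P Q).trans (Equiv.subtypeEquivRight hR),
    fun _ _ => Iff.rfl⟩

theorem card_induce_lt (G : FGraph) {P : G.V → Prop} {v : G.V} (hv : ¬P v) :
    Nat.card (G.induce P).V < Nat.card G.V :=
  Finite.card_subtype_lt hv

def aut (G : FGraph) : Subgroup (Perm G.V) where
  carrier := {σ | G.IsAut σ}
  one_mem' _ _ := Iff.rfl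
  mul_mem' ha hb u v := (hb u v).trans (ha _ _)
  inv_mem' {σ} h u v := by simpa using (h (σ⁻¹ u) (σ⁻¹ v)).symm

noncomputable def fixedSubgraphOf (G : FGraph) (S : Subgroup (Perm G.V)) : FGraph :=
  G.induce fun v => S ≤ stabilizer (Perm G.V) v

theorem fixedSubgraph_iso_fixedSubgraphOf_zpowers (G : FGraph) (σ : Perm G.V) :
    (G.fixedSubgraph σ).Iso (G.fixedSubgraphOf (zpowers σ)) :=
  G.induce_congr fun v => by rw [zpowers_le, mem_stabilizer_iff, Perm.smul_def]

theorem IsAut.exists_of_iso {G H : FGraph} (hGH : G.Iso H) {τ : Perm H.V} (hτ : H.IsAut τ) :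
    ∃ σ : Perm G.V, G.IsAut σ ∧ orderOf σ = orderOf τ ∧
      (G.fixedSubgraph σ).Iso (H.fixedSubgraph τ) := by
  obtain ⟨e, he⟩ := hGH
  refine ⟨e.symm.permCongrHom τ, fun u v => ?_, MulEquiv.orderOf_eq _ _,
    induce_iso_induce e he fun v => ?_⟩
  · have h := he (e.symm (τ (e u))) (e.symm (τ (e v)))
    rw [apply_symm_apply, apply_symm_apply] at h
    exact (he u v).trans ((hτ _ _).trans h.symm)
  · simp [Equiv.permCongrHom, Equiv.permCongr_apply, Equiv.symm_apply_eq]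

end FGraph

open FGraph

theorem ReduceStep.of_iso_left {p : ℕ} {G H K : FGraph} (hGH : G.Iso H)
    (h : ReduceStep p H K) : ReduceStep p G K := by
  obtain ⟨τ, hτ, hord, hK⟩ := h
  obtain ⟨σ, hσ, hστ, hfix⟩ := hτ.exists_of_iso hGH
  exact ⟨σ, hσ, hστ.trans hord, hK.trans hfix.symm⟩

theorem ReduceStep.card_lt {p : ℕ} (hp : p ≠ 1) {G K : FGraph} (h : ReduceStep p G K) :
    Nat.card K.V < Nat.card G.V := by
  obtain ⟨σ, -, hord, ⟨e, -⟩⟩ := h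
  obtain ⟨v, hv⟩ : ∃ v, σ v ≠ v := by
    by_contra! hσ
    rw [show σ = 1 from Equiv.ext hσ, orderOf_one] at hord
    exact hp hord.symm
  rw [Nat.card_congr e]
  exact G.card_induce_lt hv

namespace FGraph

def IsReduced (p : ℕ) (G : FGraph) : Prop :=
  ¬∃ σ : Perm G.V, G.IsAut σ ∧ orderOf σ = p

theorem isReduced_iff {p : ℕ} {G : FGraph} : G.IsReduced p ↔ ∀ K, ¬ReduceStep p G K :=
  ⟨fun hG _ ⟨σ, hσ, hord, _⟩ => hG ⟨σ, hσ, hord⟩,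
    fun h ⟨σ, hσ, hord⟩ => h _ ⟨σ, hσ, hord, Iso.refl _⟩⟩

theorem IsReduced.of_iso {p : ℕ} {G H : FGraph} (hGH : G.Iso H) (hG : G.IsReduced p) :
    H.IsReduced p :=
  isReduced_iff.2 fun _ h => isReduced_iff.1 hG _ (h.of_iso_left hGH)

theorem IsReduced.eq_of_reflTransGen {p : ℕ} {G K : FGraph} (hG : G.IsReduced p)
    (h : Relation.ReflTransGen (ReduceStep p) G K) : K = G := by
  rcases h.cases_head with rfl | ⟨M, hGM, -⟩
  · rfl
  · exact (isReduced_iff.1 hG M hGM).elim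

end FGraph

def Reaches (p : ℕ) (G K : FGraph) : Prop :=
  ∃ K', Relation.ReflTransGen (ReduceStep p) G K' ∧ K'.Iso K

namespace Reaches

variable {p : ℕ} {G H K : FGraph}

theorem of_iso (h : G.Iso K) : Reaches p G K := ⟨G, .refl, h⟩

theorem of_reduceStep (h : ReduceStep p G K) : Reaches p G K := ⟨K, .single h, Iso.refl _⟩

theorem iso_right (h : Reaches p G H) (hHK : H.Iso K) : Reaches p G K :=
  let ⟨H', hGH', hH'H⟩ := h
  ⟨H', hGH', hH'H.trans hHK⟩

theorem iso_left (hGH : G.Iso H) (h : Reaches p H K) : Reaches p G K := by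
  obtain ⟨K', hHK', hK'K⟩ := h
  rcases hHK'.cases_head with rfl | ⟨M, hHM, hMK'⟩
  · exact of_iso (hGH.trans hK'K)
  · exact ⟨K', .head (hHM.of_iso_left hGH) hMK', hK'K⟩

theorem trans (h₁ : Reaches p G H) (h₂ : Reaches p H K) : Reaches p G K := by
  obtain ⟨H', hGH', hH'H⟩ := h₁
  obtain ⟨K', hH'K', hK'K⟩ := iso_left hH'H h₂
  exact ⟨K', hGH'.trans hH'K', hK'K⟩

end Reaches

theorem exists_pow_prime_pow_notMem {M : Type*} [Monoid M] {s : Set M} {x : M} (p : ℕ)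
    (hx : x ∉ s) {k : ℕ} (hk : x ^ p ^ k ∈ s) : ∃ j, x ^ p ^ j ∉ s ∧ (x ^ p ^ j) ^ p ∈ s := by
  induction k with
  | zero => rw [pow_zero, pow_one] at hk; exact (hx hk).elim
  | succ k ih =>
    by_cases h : x ^ p ^ k ∈ s
    · exact ih h
    · exact ⟨k, h, by rwa [← pow_mul, ← pow_succ]⟩

/-- By the normalizer condition some `x ∉ R` normalizes `R`; take `y` to be the last
`p`-power of `x` outside `R`. -/
theorem IsPGroup.exists_mem_normalizer_notMem_pow_mem {G : Type*} [Group G] [Finite G] {p : ℕ}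
    [Fact p.Prime] {R S : Subgroup G} (hS : IsPGroup p S) (hRS : R < S) :
    ∃ y ∈ S, y ∈ normalizer (R : Set G) ∧ y ∉ R ∧ y ^ p ∈ R := by
  have := hS.isNilpotent
  have hR_ne_top : R.subgroupOf S ≠ ⊤ := fun h => hRS.not_ge (subgroupOf_eq_top.1 h)
  have hlt := Group.normalizerCondition_of_isNilpotent _ (lt_top_iff_ne_top.2 hR_ne_top)
  rw [← subgroupOf_normalizer_eq hRS.le] at hlt
  obtain ⟨x, hxN, hxR⟩ := SetLike.exists_of_lt hlt
  rw [mem_subgroupOf] at hxN hxR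
  obtain ⟨k, hk⟩ := hS x
  have hk' : (x : G) ^ p ^ k = 1 := by simpa using congrArg Subtype.val hk
  obtain ⟨j, hj, hjp⟩ := exists_pow_prime_pow_notMem (s := R) p hxR (by rw [hk']; exact R.one_mem)
  exact ⟨_, pow_mem x.2 _, pow_mem hxN _, hj, hjp⟩

theorem map_conj_le_stabilizer_apply_iff {α : Type*} (S : Subgroup (Perm α)) (g : Perm α)
    (v : α) : S.map (MulAut.conj g).toMonoidHom ≤ stabilizer (Perm α) (g v) ↔
      S ≤ stabilizer (Perm α) v := by
  rw [← Perm.smul_def, stabilizer_smul_eq_stabilizer_map_conj,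
    map_le_map_iff_of_injective (MulAut.conj g).injective]

theorem le_stabilizer_apply_iff_of_mem_normalizer {α : Type*} {R : Subgroup (Perm α)}
    {y : Perm α} (hy : y ∈ normalizer (R : Set (Perm α))) (v : α) :
    R ≤ stabilizer (Perm α) (y v) ↔ R ≤ stabilizer (Perm α) v := by
  conv_lhs => rw [← mem_normalizer_iff_map_conj_eq.1 hy]
  exact map_conj_le_stabilizer_apply_iff R y v

namespace FGraph

variable {p : ℕ} [Fact p.Prime]

theorem reaches_fixedSubgraphOf_sup_zpowers (G : FGraph) {R : Subgroup (Perm G.V)}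
    {y : Perm G.V} (hy : y ∈ G.aut) (hyR : y ∈ normalizer (R : Set (Perm G.V))) (hyp : y ^ p ∈ R) :
    Reaches p (G.fixedSubgraphOf R) (G.fixedSubgraphOf (R ⊔ zpowers y)) := by
  set ŷ : Perm (G.fixedSubgraphOf R).V :=
    y.subtypePerm (le_stabilizer_apply_iff_of_mem_normalizer hyR)
  have hŷp : ŷ ^ p = 1 :=
    (Perm.subtypePerm_pow y p _).trans (Equiv.ext fun w => Subtype.ext (w.2 hyp))
  have hfix : ((G.fixedSubgraphOf R).fixedSubgraph ŷ).Iso (G.fixedSubgraphOf (R ⊔ zpowers y)) :=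
    G.induce_induce_iso fun v => by
      rw [sup_le_iff, zpowers_le, mem_stabilizer_iff, Perm.smul_def]
      exact ⟨fun ⟨h, h'⟩ => ⟨h, congrArg Subtype.val h'⟩, fun ⟨h, h'⟩ => ⟨h, Subtype.ext h'⟩⟩
  rcases Nat.Prime.eq_one_or_self_of_dvd Fact.out _ (orderOf_dvd_of_pow_eq_one hŷp) with h | h
  · rw [orderOf_eq_one_iff] at h
    refine .of_iso ((induce_iso_self _ fun w => ?_).symm.trans hfix)
    rw [h]; rfl
  · exact .of_reduceStep ⟨ŷ, fun u v => hy u.1 v.1, h, hfix.symm⟩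

theorem reaches_fixedSubgraphOf_of_le (G : FGraph) {S : Subgroup (Perm G.V)} (hSaut : S ≤ G.aut)
    (hS : IsPGroup p S) {R : Subgroup (Perm G.V)} (hRS : R ≤ S) :
    Reaches p (G.fixedSubgraphOf R) (G.fixedSubgraphOf S) := by
  induction R using WellFoundedGT.induction with
  | _ R ih =>
  rcases hRS.eq_or_lt with rfl | hlt
  · exact .of_iso (Iso.refl _)
  obtain ⟨y, hyS, hyN, hyR, hyp⟩ := hS.exists_mem_normalizer_notMem_pow_mem hlt
  have hRR' : R < R ⊔ zpowers y :=
    lt_of_le_of_ne le_sup_left fun h => hyR (h ▸ mem_sup_right (mem_zpowers y))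
  exact (G.reaches_fixedSubgraphOf_sup_zpowers (hSaut hyS) hyN hyp).trans
    (ih _ hRR' (sup_le hRS (zpowers_le.2 hyS)))

theorem fixedSubgraphOf_map_conj_iso (G : FGraph) {g : Perm G.V} (hg : g ∈ G.aut)
    (S : Subgroup (Perm G.V)) :
    (G.fixedSubgraphOf S).Iso (G.fixedSubgraphOf (S.map (MulAut.conj g).toMonoidHom)) :=
  induce_iso_induce g hg fun v => (map_conj_le_stabilizer_apply_iff S g v).symm

theorem fixedSubgraphOf_sylow_iso (G : FGraph) (P Q : Sylow p G.aut) :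
    (G.fixedSubgraphOf ((P : Subgroup G.aut).map G.aut.subtype)).Iso
      (G.fixedSubgraphOf ((Q : Subgroup G.aut).map G.aut.subtype)) := by
  obtain ⟨g, rfl⟩ := MulAction.exists_smul_eq G.aut P Q
  convert G.fixedSubgraphOf_map_conj_iso g.2 ((P : Subgroup G.aut).map G.aut.subtype) using 2
  change map _ (map (MulAut.conj g).toMonoidHom P) = _
  rw [map_map, map_map]
  rfl

end FGraph

theorem ReduceStep.reaches_fixedSubgraphOf_sylow {p : ℕ} [Fact p.Prime] {G M : FGraph}
    (h : ReduceStep p G M) (P : Sylow p G.aut) :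
    Reaches p M (G.fixedSubgraphOf ((P : Subgroup G.aut).map G.aut.subtype)) := by
  obtain ⟨τ, hτ, hord, hM⟩ := h
  have hτ'p : IsPGroup p (zpowers (⟨τ, hτ⟩ : G.aut)) :=
    .of_card (n := 1) (by rw [Nat.card_zpowers, pow_one, ← hord]; exact Subgroup.orderOf_mk τ hτ)
  obtain ⟨Q, hτ'Q⟩ := hτ'p.exists_le_sylow
  have hτQ : zpowers τ ≤ (Q : Subgroup G.aut).map G.aut.subtype :=
    zpowers_le.2 ⟨_, hτ'Q (mem_zpowers _), rfl⟩
  exact ((G.reaches_fixedSubgraphOf_of_le (map_subtype_le _) (Q.isPGroup'.map _) hτQ).iso_left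
    (hM.trans (G.fixedSubgraph_iso_fixedSubgraphOf_zpowers τ))).iso_right
    (G.fixedSubgraphOf_sylow_iso Q P)

namespace FGraph

variable {p : ℕ}

theorem exists_reflTransGen_isReduced (hp : p ≠ 1) (G : FGraph) :
    ∃ K, Relation.ReflTransGen (ReduceStep p) G K ∧ K.IsReduced p := by
  induction hn : Nat.card G.V using Nat.strong_induction_on generalizing G with
  | _ n ih =>
  by_cases hG : G.IsReduced p
  · exact ⟨G, .refl, hG⟩
  obtain ⟨K, hGK⟩ : ∃ K, ReduceStep p G K := by simpa [isReduced_iff] using hG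
  obtain ⟨L, hKL, hL⟩ := ih _ (hn ▸ hGK.card_lt hp) K rfl
  exact ⟨L, .head hGK hKL, hL⟩

theorem IsReduced.iso_of_reflTransGen [Fact p.Prime] {G K K' : FGraph} (hK : K.IsReduced p)
    (hK' : K'.IsReduced p) (h : Relation.ReflTransGen (ReduceStep p) G K)
    (h' : Relation.ReflTransGen (ReduceStep p) G K') : K.Iso K' := by
  have hp : p.Prime := Fact.out
  induction hn : Nat.card G.V using Nat.strong_induction_on generalizing G K K' with
  | _ n ih =>
  rcases h.cases_head with rfl | ⟨M, hGM, hMK⟩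
  · rw [hK.eq_of_reflTransGen h']
    exact Iso.refl _
  rcases h'.cases_head with rfl | ⟨M', hGM', hMK'⟩
  · rw [hK'.eq_of_reflTransGen h]
    exact Iso.refl _
  obtain ⟨L, hHL, hL⟩ := exists_reflTransGen_isReduced hp.ne_one
    (G.fixedSubgraphOf (((default : Sylow p G.aut) : Subgroup G.aut).map G.aut.subtype))
  have hL_unique : ∀ M K, ReduceStep p G M → Relation.ReflTransGen (ReduceStep p) M K →
      K.IsReduced p → K.Iso L := by
    intro M K hGM hMK hK
    obtain ⟨L', hML', hL'L⟩ :=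
      (hGM.reaches_fixedSubgraphOf_sylow default).trans ⟨L, hHL, Iso.refl _⟩
    have hcard : Nat.card M.V < n := hn ▸ hGM.card_lt hp.ne_one
    exact (ih _ hcard hK (hL.of_iso hL'L.symm) hMK hML' rfl).trans hL'L
  exact (hL_unique M K hGM hMK hK).trans (hL_unique M' K' hGM' hMK' hK').symm

end FGraph

/-- Every graph has, up to isomorphism, exactly one reduced form with respect to
reduction by automorphisms of prime order p. -/
theorem stmt6 (p : ℕ) (hp : p.Prime) (G : FGraph) :
    ∃ K : FGraph,
      Relation.ReflTransGen (ReduceStep p) G K ∧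
      (¬∃ σ : Equiv.Perm K.V, K.IsAut σ ∧ orderOf σ = p) ∧
      ∀ K' : FGraph,
        Relation.ReflTransGen (ReduceStep p) G K' →
        (¬∃ σ : Equiv.Perm K'.V, K'.IsAut σ ∧ orderOf σ = p) →
        K.Iso K' := by
  have := Fact.mk hp
  obtain ⟨K, hGK, hK⟩ := exists_reflTransGen_isReduced hp.ne_one G
  exact ⟨K, hGK, hK, fun K' hGK' hK' => hK.iso_of_reflTransGen hK' hGK hGK'⟩
end

section
/- Let S be a set of vectors in GF(2)^n containing the all-ones vector, such that for any two indices i ≠ j there is a vector in S whose i-th and j-th coordinates differ. Then the closure of S under coordinate-wise addition and coordinate-wise multiplication contains every standard basis vector e_1,...,e_n. -/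
/-- Closure of a set of vectors in GF(2)^n under coordinate-wise addition and
coordinate-wise multiplication. -/
inductive Closure {n : ℕ} (S : Set (Fin n → ZMod 2)) : (Fin n → ZMod 2) → Prop
  | base {v : Fin n → ZMod 2} : v ∈ S → Closure S v
  | add {u v : Fin n → ZMod 2} : Closure S u → Closure S v → Closure S (u + v)
  | mul {u v : Fin n → ZMod 2} : Closure S u → Closure S v → Closure S (u * v)

/-!
For `j ≠ i`, a vector of `S` separating `i` from `j`, or its sum with the all-ones vector,
is `1` at `i` and `0` at `j`. The product of these vectors over all `j ≠ i` is `e_i`.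
-/

open Finset

theorem Pi.single_one_eq_prod_erase {ι R : Type*} [Fintype ι] [DecidableEq ι]
    [CommMonoidWithZero R] (i : ι) (w : ι → ι → R)
    (hw : ∀ j ∈ univ.erase i, w j i = 1 ∧ w j j = 0) :
    Pi.single i 1 = ∏ j ∈ univ.erase i, w j := by
  funext k
  rw [Finset.prod_apply]
  by_cases hk : k = i
  · subst hk
    rw [Pi.single_eq_same]
    exact (prod_eq_one fun j hj => (hw j hj).1).symm
  · have hk' : k ∈ univ.erase i := mem_erase.2 ⟨hk, mem_univ k⟩
    rw [Pi.single_eq_of_ne hk]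
    exact (prod_eq_zero (f := fun j => w j k) hk' (hw k hk').2).symm

namespace Closure

variable {n : ℕ} {S : Set (Fin n → ZMod 2)}

theorem one (hones : (fun _ => 1) ∈ S) : Closure S 1 :=
  base hones

theorem prod (hones : (fun _ => 1) ∈ S) {ι : Type*} (t : Finset ι) (w : ι → Fin n → ZMod 2)
    (hw : ∀ j ∈ t, Closure S (w j)) : Closure S (∏ j ∈ t, w j) :=
  prod_induction w (Closure S) (fun _ _ => mul) (one hones) hw

theorem exists_eq_one_eq_zero (hones : (fun _ => 1) ∈ S) {i j : Fin n} {v : Fin n → ZMod 2}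
    (hvS : v ∈ S) (hv : v i ≠ v j) : ∃ w, Closure S w ∧ w i = 1 ∧ w j = 0 := by
  have hZMod2 : ∀ a b : ZMod 2, a ≠ b → (a = 1 ∧ b = 0) ∨ (a + 1 = 1 ∧ b + 1 = 0) := by
    decide
  rcases hZMod2 _ _ hv with hvij | hvij
  · exact ⟨v, base hvS, hvij⟩
  · exact ⟨v + 1, add (base hvS) (one hones), hvij⟩

end Closure

/-- If S contains the all-ones vector and separates every pair of coordinates, then
the closure of S under coordinate-wise addition and multiplication contains every
standard basis vector. -/
theorem stmt10 {n : ℕ} (S : Set (Fin n → ZMod 2))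
    (hones : (fun _ => 1) ∈ S)
    (hsep : ∀ i j : Fin n, i ≠ j → ∃ v ∈ S, v i ≠ v j)
    (i : Fin n) :
    Closure S (Pi.single i 1) := by
  have hsep_i : ∀ j ∈ univ.erase i, ∃ w, Closure S w ∧ w i = 1 ∧ w j = 0 := fun j hj => by
    obtain ⟨v, hvS, hv⟩ := hsep i j (ne_of_mem_erase hj).symm
    exact Closure.exists_eq_one_eq_zero hones hvS hv
  choose! w hw_closure hw_eq using hsep_i
  rw [Pi.single_one_eq_prod_erase i w hw_eq]
  exact Closure.prod hones _ w hw_closure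
end

section
/- Every involution-free tree on more than one vertex has two (distinct) vertices of degree 2 each adjacent to a leaf. -/
/-!
Take a longest path `u = v₀, v₁, …, vₙ = v`. In an acyclic graph both of its ends are leaves,
and two leaves with a common neighbour, or two adjacent leaves, are exchanged by an involution;
hence `n ≥ 3`. A neighbour of `v₁` other than `v₀, v₂` would begin another longest path and thus
be a leaf next to `v₀`, so `deg v₁ = 2`, and symmetrically `deg vₙ₋₁ = 2`.
-/

/-- A permutation of the vertices is an automorphism of the simple graph G. -/
def IsGraphAut {V : Type} (G : SimpleGraph V) (σ : Equiv.Perm V) : Prop :=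
  ∀ u v, G.Adj u v ↔ G.Adj (σ u) (σ v)

namespace SimpleGraph

variable {V : Type} {G : SimpleGraph V}

def InvolutionFree (G : SimpleGraph V) : Prop :=
  ¬∃ σ : Equiv.Perm V, IsGraphAut G σ ∧ orderOf σ = 2

lemma isGraphAut_swap [DecidableEq V] {u w : V}
    (h : ∀ x, x ≠ u → x ≠ w → (G.Adj u x ↔ G.Adj w x)) :
    IsGraphAut G (Equiv.swap u w) := by
  intro a b
  simp only [Equiv.swap_apply_def]
  split_ifs <;> subst_vars <;> grind [G.adj_comm, SimpleGraph.irrefl]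

/-- Two vertices with the same neighbours outside themselves are swapped by an involution. -/
lemma InvolutionFree.eq_of_forall_adj_iff (hG : G.InvolutionFree) {u w : V}
    (h : ∀ x, x ≠ u → x ≠ w → (G.Adj u x ↔ G.Adj w x)) : u = w := by
  classical
  by_contra hne
  refine hG ⟨Equiv.swap u w, isGraphAut_swap h, orderOf_eq_prime ?_ ?_⟩
  · rw [sq, Equiv.swap_mul_self]
  · rwa [Ne, Equiv.swap_eq_one_iff]

lemma Walk.IsPath.snd_ne_penultimate {u v : V} {p : G.Walk u v} (hp : p.IsPath)
    (hn : 3 ≤ p.length) : p.snd ≠ p.penultimate := fun h => by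
  have := hp.getVert_injOn (x₁ := 1) (x₂ := p.length - 1) (by simp; omega) (by simp) h
  omega

def Walk.IsLongestPath {u v : V} (p : G.Walk u v) : Prop :=
  p.IsPath ∧ ∀ ⦃x y : V⦄ (q : G.Walk x y), q.IsPath → q.length ≤ p.length

lemma exists_isLongestPath (G : SimpleGraph V) [Nonempty V] [Finite G.edgeSet] :
    ∃ (u v : V) (p : G.Walk u v), p.IsLongestPath := by
  obtain ⟨u, v, p, hp, hmax⟩ := Walk.exists_isPath_forall_isPath_length_le_length G
  exact ⟨u, v, p, hp, fun x y q hq => hmax x y q hq⟩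

namespace Walk.IsLongestPath

variable {u v : V} {p : G.Walk u v}

lemma reverse (hp : p.IsLongestPath) : p.reverse.IsLongestPath :=
  ⟨hp.1.reverse, by simpa using hp.2⟩

lemma eq_snd_of_adj (hG : G.IsAcyclic) (hp : p.IsLongestPath) {x : V} (hx : G.Adj u x) :
    x = p.snd := by
  by_cases hxp : x ∈ p.support
  · exact hG.eq_snd_of_adj_start hp.1 hx hxp
  · have := hp.2 (cons hx.symm p) (hp.1.cons hxp)
    simp at this

lemma adj_iff_eq_snd (hG : G.IsAcyclic) (hp : p.IsLongestPath) (hn : 0 < p.length) {x : V} :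
    G.Adj u x ↔ x = p.snd :=
  ⟨hp.eq_snd_of_adj hG, fun h => h ▸ p.adj_snd (not_nil_iff_lt_length.mpr hn)⟩

lemma degree_eq_one [G.LocallyFinite] (hG : G.IsAcyclic) (hp : p.IsLongestPath)
    (hn : 0 < p.length) : G.degree u = 1 :=
  degree_eq_one_iff_existsUnique_adj.mpr
    ⟨p.snd, p.adj_snd (not_nil_iff_lt_length.mpr hn), fun _ => hp.eq_snd_of_adj hG⟩

lemma length_pos [Nontrivial V] (hconn : G.Connected) (hp : p.IsLongestPath) :
    0 < p.length := by
  classical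
  obtain ⟨a, b, hab⟩ := exists_pair_ne V
  obtain ⟨q, hq⟩ := (hconn a b).some.toPath
  exact (not_nil_iff_lt_length.mp (not_nil_of_ne hab)).trans_le (hp.2 q hq)

/-- Otherwise the two ends of the path are leaves that can be swapped. -/
lemma three_le_length [Nontrivial V] (hconn : G.Connected) (hG : G.IsAcyclic)
    (hinv : G.InvolutionFree) (hp : p.IsLongestPath) : 3 ≤ p.length := by
  have hpos := hp.length_pos hconn
  have huv : u ≠ v := fun h => not_nil_iff_lt_length.mpr hpos (hp.1.nil_iff_eq.mpr h)
  by_contra hlen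
  have hends : p.snd = v ∧ p.penultimate = u ∨ p.snd = p.penultimate := by
    rcases (by omega : p.length = 1 ∨ p.length = 2) with h | h
    · left
      simp [Walk.snd, Walk.penultimate, h, ← p.getVert_length]
    · right
      simp [Walk.snd, Walk.penultimate, h]
  refine huv (hinv.eq_of_forall_adj_iff fun x hxu hxv => ?_)
  rw [hp.adj_iff_eq_snd hG hpos, hp.reverse.adj_iff_eq_snd hG (by simpa using hpos), snd_reverse]
  grind

lemma neighborSet_snd (hG : G.IsAcyclic) (hinv : G.InvolutionFree) (hp : p.IsLongestPath)
    (hn : 2 ≤ p.length) : G.neighborSet p.snd = {u, p.getVert 2} := by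
  cases p with
  | nil => simp at hn
  | @cons _ w _ h q =>
    have hq : q.IsPath := hp.1.of_cons
    have hqn : 0 < q.length := by simp at hn; omega
    ext x
    simp only [getVert_cons_succ, getVert_zero, mem_neighborSet, Set.mem_insert_iff,
      Set.mem_singleton_iff]
    refine ⟨fun hx => ?_, ?_⟩
    · -- a third neighbour `x` starts another longest path, so `x` and `u` are twin leaves
      by_contra! hne
      have hxq : x ∉ q.support := fun hxq => hne.2 (hG.eq_snd_of_adj_start hq hx hxq)
      have hpx : (cons hx.symm q).IsLongestPath := ⟨hq.cons hxq, by simpa using hp.2⟩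
      refine hne.1 (hinv.eq_of_forall_adj_iff fun y _ _ => ?_)
      rw [hpx.adj_iff_eq_snd hG (by simp), hp.adj_iff_eq_snd hG (by simp), snd_cons, snd_cons]
    · rintro (rfl | rfl)
      exacts [h.symm, q.adj_snd (not_nil_iff_lt_length.mpr hqn)]

lemma degree_snd [G.LocallyFinite] (hG : G.IsAcyclic) (hinv : G.InvolutionFree)
    (hp : p.IsLongestPath) (hn : 2 ≤ p.length) : G.degree p.snd = 2 := by
  have hne : u ≠ p.getVert 2 := fun h =>
    by simpa [h] using hp.1.getVert_injOn (x₁ := 0) (x₂ := 2) (by simp) (by simpa using hn)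
  rw [← card_neighborSet_eq_degree, ← Nat.card_eq_fintype_card, hp.neighborSet_snd hG hinv hn,
    Nat.card_coe_set_eq, Set.ncard_pair hne]

lemma degree_penultimate [G.LocallyFinite] (hG : G.IsAcyclic) (hinv : G.InvolutionFree)
    (hp : p.IsLongestPath) (hn : 2 ≤ p.length) : G.degree p.penultimate = 2 := by
  rw [← snd_reverse]
  exact hp.reverse.degree_snd hG hinv (by rwa [length_reverse])

end Walk.IsLongestPath

end SimpleGraph

theorem stmt11_general {V : Type} [Fintype V] (G : SimpleGraph V)
    [DecidableRel G.Adj] (htree : G.IsTree) (hcard : 1 < Fintype.card V)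
    (hinv : ¬∃ σ : Equiv.Perm V, IsGraphAut G σ ∧ orderOf σ = 2) :
    ∃ u v : V, u ≠ v ∧ G.degree u = 2 ∧ G.degree v = 2 ∧
      (∃ l, G.Adj u l ∧ G.degree l = 1) ∧ (∃ l, G.Adj v l ∧ G.degree l = 1) := by
  have := Fintype.one_lt_card_iff_nontrivial.mp hcard
  obtain ⟨a, b, p, hp⟩ := G.exists_isLongestPath
  have hG := htree.isAcyclic
  have hn := hp.three_le_length htree.connected hG hinv
  have hnil : ¬p.Nil := SimpleGraph.Walk.not_nil_iff_lt_length.mpr (by omega)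
  exact ⟨p.snd, p.penultimate, hp.1.snd_ne_penultimate hn,
    hp.degree_snd hG hinv (by omega), hp.degree_penultimate hG hinv (by omega),
    ⟨a, (p.adj_snd hnil).symm, hp.degree_eq_one hG (by omega)⟩,
    ⟨b, p.adj_penultimate hnil, hp.reverse.degree_eq_one hG (by rw [p.length_reverse]; omega)⟩⟩

/-- An involution-free tree on more than one vertex has two distinct vertices of
degree 2, each adjacent to a leaf. -/
theorem stmt11 {V : Type} [Fintype V] [DecidableEq V] (G : SimpleGraph V)
    [DecidableRel G.Adj] (htree : G.IsTree) (hcard : 1 < Fintype.card V)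
    (hinv : ¬∃ σ : Equiv.Perm V, IsGraphAut G σ ∧ orderOf σ = 2) :
    ∃ u v : V, u ≠ v ∧ G.degree u = 2 ∧ G.degree v = 2 ∧
      (∃ l, G.Adj u l ∧ G.degree l = 1) ∧ (∃ l, G.Adj v l ∧ G.degree l = 1) :=
  stmt11_general G htree hcard hinv
end

section
/- An involution-free tree has trivial automorphism group. -/
section IsGraphAut

variable {V : Type} {G : SimpleGraph V} {σ τ : Equiv.Perm V}

theorem IsGraphAut.mul (hσ : IsGraphAut G σ) (hτ : IsGraphAut G τ) : IsGraphAut G (σ * τ) :=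
  fun u v => (hτ u v).trans (hσ (τ u) (τ v))

theorem IsGraphAut.inv (hσ : IsGraphAut G σ) : IsGraphAut G σ⁻¹ := fun u v => by
  simpa using (hσ (σ⁻¹ u) (σ⁻¹ v)).symm

end IsGraphAut

namespace SimpleGraph.IsTree

variable {V : Type*} {V' : Type*} {G : SimpleGraph V}

noncomputable def path (hG : G.IsTree) (a b : V) : G.Walk a b :=
  (hG.existsUnique_path a b).choose

theorem isPath_path (hG : G.IsTree) (a b : V) : (hG.path a b).IsPath :=
  (hG.existsUnique_path a b).choose_spec.1

theorem eq_path (hG : G.IsTree) {a b : V} {p : G.Walk a b} (hp : p.IsPath) : p = hG.path a b :=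
  (hG.existsUnique_path a b).choose_spec.2 p hp

noncomputable def stepToward (hG : G.IsTree) (a b : V) : V := (hG.path a b).snd

theorem stepToward_self (hG : G.IsTree) (a : V) : hG.stepToward a a = a := by
  rw [stepToward, ← hG.eq_path Walk.IsPath.nil]
  rfl

theorem adj_stepToward (hG : G.IsTree) {a b : V} (h : a ≠ b) : G.Adj a (hG.stepToward a b) :=
  Walk.adj_snd (Walk.not_nil_of_ne h)

theorem stepToward_eq_of_adj (hG : G.IsTree) {a b : V} (h : G.Adj a b) :
    hG.stepToward a b = b := by
  rw [stepToward, ← hG.eq_path (Path.singleton h).isPath]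
  rfl

theorem stepToward_map (hG : G.IsTree) {G' : SimpleGraph V'} (hG' : G'.IsTree) (f : G →g G')
    (hf : Function.Injective f) (a b : V) :
    hG'.stepToward (f a) (f b) = f (hG.stepToward a b) := by
  rw [stepToward, ← hG'.eq_path ((hG.isPath_path a b).map hf)]
  exact Walk.getVert_map _ _ 1

theorem stepToward_stepToward_ne (hG : G.IsTree) {a b : V} (h : a ≠ b) :
    hG.stepToward (hG.stepToward a b) b ≠ a := by
  have hnil := Walk.not_nil_of_ne (p := hG.path a b) h
  have ha : a ∉ (hG.path a b).tail.support := by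
    have hp := hG.isPath_path a b
    rw [← Walk.cons_tail_eq _ hnil, Walk.cons_isPath_iff] at hp
    exact hp.2
  rw [hG.eq_path (hG.isPath_path a b).tail] at ha
  intro heq
  have hmem : hG.stepToward (hG.stepToward a b) b ∈ (hG.path (hG.stepToward a b) b).support :=
    Walk.getVert_mem_support _ 1
  rw [heq] at hmem
  exact ha hmem

theorem stepToward_eq_stepToward_of_adj (hG : G.IsTree) {v x y : V} (hxy : G.Adj x y)
    (hx : x ≠ v) (hy : y ≠ v) :
    hG.stepToward v x = hG.stepToward v y := by
  wlog hmem : x ∈ (hG.path v y).support generalizing x y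
  · exact (this hxy.symm hy hx (hG.isAcyclic.mem_support_of_ne_mem_support_of_adj_of_isPath
      (hG.isPath_path v x) (hG.isPath_path v y) hxy hmem)).symm
  have hsupp : (hG.path v x).support ⊆ (hG.path v y).support := by
    rw [hG.isAcyclic.path_concat (hG.isPath_path v x) (hG.isPath_path v y) hxy hmem]
    exact Walk.support_subset_support_concat _ _
  exact hG.isAcyclic.eq_snd_of_adj_start (hG.isPath_path v y) (hG.adj_stepToward hx.symm)
    (hsupp (Walk.getVert_mem_support _ 1))

theorem stepToward_eq_of_adj_of_stepToward_ne (hG : G.IsTree) {x y z : V} (hxy : G.Adj x y)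
    (h : hG.stepToward x z ≠ y) : hG.stepToward y z = x := by
  have hy : y ∉ (hG.path x z).support := fun hy =>
    h (hG.isAcyclic.eq_snd_of_adj_start (hG.isPath_path x z) hxy hy).symm
  rw [stepToward, ← hG.eq_path ((hG.isPath_path x z).cons hy (h := hxy.symm))]
  exact Walk.snd_cons _ _

theorem eq_and_eq_of_stepToward_eq (hG : G.IsTree) {y z c d : V} (hcd : G.Adj c d)
    (hc : c ≠ y) (hd : d ≠ z) (hyc : hG.stepToward y c = z) (hzd : hG.stepToward z d = y) :
    c = z ∧ d = y := by
  by_cases hcz : c = z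
  · subst hcz
    exact ⟨rfl, by rwa [hG.stepToward_eq_of_adj hcd] at hzd⟩
  · refine absurd ?_ (hG.stepToward_stepToward_ne hc.symm)
    rw [hyc, hG.stepToward_eq_stepToward_of_adj hcd hcz hd, hzd]

theorem injective_of_adj_succ_of_ne_add_two (hG : G.IsTree) (f : ℕ → V)
    (hadj : ∀ i, G.Adj (f i) (f (i + 1))) (hnb : ∀ i, f (i + 2) ≠ f i) :
    Function.Injective f := by
  have hback : ∀ j i, hG.stepToward (f (j + i + 1)) (f j) = f (j + i) := by
    intro j i
    induction i with
    | zero => exact hG.stepToward_eq_of_adj (hadj j).symm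
    | succ i ih =>
      refine hG.stepToward_eq_of_adj_of_stepToward_ne (hadj (j + i + 1)) ?_
      rw [← add_assoc, ih]
      exact (hnb (j + i)).symm
  have hne : ∀ j i, f (j + i + 1) ≠ f j := fun j i heq => by
    have h := hback j i
    rw [heq, hG.stepToward_self] at h
    exact (hadj (j + i)).ne (h ▸ heq).symm
  intro a b hab
  by_contra hne'
  rcases Nat.lt_or_gt_of_ne hne' with h | h
  · obtain ⟨i, rfl⟩ := Nat.exists_eq_add_of_lt h
    exact hne a i hab.symm
  · obtain ⟨i, rfl⟩ := Nat.exists_eq_add_of_lt h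
    exact hne b i hab

end SimpleGraph.IsTree

section BlockSwap

variable {V : Type} {G : SimpleGraph V} {σ : Equiv.Perm V} {S : Set V} {x y : V}

open Classical in
noncomputable def blockSwap (σ : Equiv.Perm V) (S : Set V) (x : V) : V :=
  if x ∈ S then σ x else if σ⁻¹ x ∈ S then σ⁻¹ x else x

theorem blockSwap_of_mem (hx : x ∈ S) : blockSwap σ S x = σ x := if_pos hx

theorem blockSwap_of_inv_mem (hS : ∀ x ∈ S, σ x ∉ S) (hx : σ⁻¹ x ∈ S) :
    blockSwap σ S x = σ⁻¹ x := by
  have hxS : x ∉ S := by simpa using hS _ hx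
  rw [blockSwap, if_neg hxS, if_pos hx]

theorem blockSwap_of_notMem (hx : x ∉ S) (hx' : σ⁻¹ x ∉ S) : blockSwap σ S x = x := by
  rw [blockSwap, if_neg hx, if_neg hx']

theorem blockSwap_involutive (hS : ∀ x ∈ S, σ x ∉ S) :
    Function.Involutive (blockSwap σ S) := by
  intro x
  by_cases hx : x ∈ S
  · rw [blockSwap_of_mem hx, blockSwap_of_inv_mem hS (by simpa using hx)]
    simp
  by_cases hx' : σ⁻¹ x ∈ S
  · rw [blockSwap_of_inv_mem hS hx', blockSwap_of_mem hx']
    simp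
  · rw [blockSwap_of_notMem hx hx', blockSwap_of_notMem hx hx']

theorem adj_blockSwap (hσ : IsGraphAut G σ) (hS : ∀ x ∈ S, σ x ∉ S)
    (hfix : ∀ x y, G.Adj x y → x ∈ S → y ∉ S → σ y = y) (hxy : G.Adj x y) :
    G.Adj (blockSwap σ S x) (blockSwap σ S y) := by
  have hfix' : ∀ {x y}, G.Adj x y → σ⁻¹ x ∈ S → σ⁻¹ y ∉ S → σ⁻¹ y = y := by
    intro x y hxy hx hy
    simpa using (hfix _ _ ((hσ.inv _ _).mp hxy) hx hy).symm
  have hnot : ∀ {x y}, G.Adj x y → x ∈ S → σ⁻¹ y ∉ S := by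
    intro x y hxy hx hy
    have hyS : y ∉ S := by simpa using hS _ hy
    have hy' : σ⁻¹ y = y := by rw [Equiv.Perm.inv_eq_iff_eq, hfix _ _ hxy hx hyS]
    exact hyS (hy' ▸ hy)
  have hside : ∀ {x y}, G.Adj x y → (x ∈ S ∨ σ⁻¹ x ∈ S) →
      G.Adj (blockSwap σ S x) (blockSwap σ S y) := by
    rintro x y hxy (hx | hx)
    · rw [blockSwap_of_mem hx]
      by_cases hy : y ∈ S
      · exact blockSwap_of_mem hy ▸ (hσ x y).mp hxy
      · rw [blockSwap_of_notMem hy (hnot hxy hx)]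
        simpa only [hfix x y hxy hx hy] using (hσ x y).mp hxy
    · have hy : y ∉ S := fun hy => hnot hxy.symm hy hx
      rw [blockSwap_of_inv_mem hS hx]
      by_cases hy' : σ⁻¹ y ∈ S
      · exact blockSwap_of_inv_mem hS hy' ▸ (hσ.inv x y).mp hxy
      · rw [blockSwap_of_notMem hy hy']
        simpa only [hfix' hxy hx hy'] using (hσ.inv x y).mp hxy
  by_cases hx : x ∈ S ∨ σ⁻¹ x ∈ S
  · exact hside hxy hx
  by_cases hy : y ∈ S ∨ σ⁻¹ y ∈ S
  · exact (hside hxy.symm hy).symm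
  push Not at hx hy
  rwa [blockSwap_of_notMem hx.1 hx.2, blockSwap_of_notMem hy.1 hy.2]

theorem exists_involution_of_blockSwap (hσ : IsGraphAut G σ) (hS : ∀ x ∈ S, σ x ∉ S)
    (hfix : ∀ x y, G.Adj x y → x ∈ S → y ∉ S → σ y = y) (hx : x ∈ S) :
    ∃ τ : Equiv.Perm V, IsGraphAut G τ ∧ orderOf τ = 2 := by
  have hinv := blockSwap_involutive hS
  refine ⟨Function.Involutive.toPerm _ hinv,
    fun u v => ⟨adj_blockSwap hσ hS hfix, fun h => ?_⟩,
    orderOf_eq_prime (Equiv.ext hinv) fun h => ?_⟩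
  · simpa only [Function.Involutive.coe_toPerm, hinv _] using adj_blockSwap hσ hS hfix h
  · have hτx : Function.Involutive.toPerm _ hinv x = σ x := blockSwap_of_mem hx
    rw [h] at hτx
    exact hS x hx (hτx ▸ hx)

end BlockSwap

namespace SimpleGraph.IsTree

variable {V : Type} {G : SimpleGraph V} {σ : Equiv.Perm V}

theorem stepToward_apply_apply (hG : G.IsTree) (hσ : IsGraphAut G σ) (a b : V) :
    hG.stepToward (σ a) (σ b) = σ (hG.stepToward a b) :=
  hG.stepToward_map hG ⟨σ, (hσ _ _).mp⟩ σ.injective a b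

theorem exists_apply_apply_eq [Finite V] (hG : G.IsTree) (hσ : IsGraphAut G σ) :
    ∃ x, σ (σ x) = x := by
  by_contra! h
  have hmoved : ∀ x, x ≠ σ x := fun x hx => h x (by rw [← hx, ← hx])
  set g : V → V := fun x => hG.stepToward x (σ x)
  have hg : ∀ x, G.Adj x (g x) := fun x => hG.adj_stepToward (hmoved x)
  have hgg : ∀ x, g (g x) ≠ x := fun x hx => by
    obtain ⟨h1, h2⟩ := hG.eq_and_eq_of_stepToward_eq ((hσ _ _).mp (hg x))
      (hmoved x).symm (hmoved (g x)).symm rfl hx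
    exact h x (by rw [h1, h2])
  obtain ⟨x₀⟩ := hG.connected.nonempty
  refine not_injective_infinite_finite (fun n => g^[n] x₀)
    (hG.injective_of_adj_succ_of_ne_add_two _ ?_ ?_)
  · intro n
    simpa only [Function.iterate_succ_apply'] using hg _
  · intro n
    simpa only [Function.iterate_succ_apply'] using hgg _

theorem exists_involution_of_apply_eq_of_apply_ne (hG : G.IsTree) (hσ : IsGraphAut G σ)
    {v w : V} (hv : σ v = v) (hw : σ w ≠ w) :
    ∃ τ : Equiv.Perm V, IsGraphAut G τ ∧ orderOf τ = 2 := by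
  obtain ⟨p⟩ := hG.connected v w
  obtain ⟨⟨⟨c, u⟩, hcu⟩, -, hc, hu⟩ := p.exists_boundary_dart {x | σ x = x} hv hw
  refine exists_involution_of_blockSwap hσ (S := {x | hG.stepToward c x = u}) ?_ ?_
    (hG.stepToward_eq_of_adj hcu)
  · intro x hx hσx
    have hmap := hG.stepToward_apply_apply hσ c x
    rw [hc, hx] at hmap
    exact hu (hmap.symm.trans hσx)
  · intro x y hxy hx hy
    suffices hyc : y = c from hyc ▸ hc
    by_contra hyc
    have hxc : x ≠ c := by
      rintro rfl
      exact hcu.ne (by simpa [hG.stepToward_self] using hx)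
    exact hy ((hG.stepToward_eq_stepToward_of_adj hxy hxc hyc).symm.trans hx)

end SimpleGraph.IsTree

/-- An involution-free finite tree has trivial automorphism group. -/
theorem stmt13 {V : Type} [Fintype V] (G : SimpleGraph V) (htree : G.IsTree)
    (hinv : ¬∃ σ : Equiv.Perm V, IsGraphAut G σ ∧ orderOf σ = 2) :
    ∀ σ : Equiv.Perm V, IsGraphAut G σ → σ = 1 := by
  intro σ hσ
  by_contra hne
  obtain ⟨x, hx⟩ := htree.exists_apply_apply_eq hσ
  by_cases hsq : σ * σ = 1
  · exact hinv ⟨σ, hσ, orderOf_eq_prime (by rw [sq, hsq]) hne⟩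
  · obtain ⟨w, hw⟩ : ∃ w, (σ * σ) w ≠ w := by
      by_contra! h
      exact hsq (Equiv.ext h)
    exact hinv (htree.exists_involution_of_apply_eq_of_apply_ne (hσ.mul hσ) hx hw)
end

section
/- In a tree, the number of walks of length ℓ from a vertex e to a vertex o at distance ℓ−2 from e equals the number of edges incident to at least one vertex of the path from o to e; in particular, if the path from o to e consists of a sequence of vertices all of odd degree except for even-degree e, this number of walks is even. -/
/-!
Induct along the path `e = v₀, v₁, …, vₙ = o`. A walk of length `n + 2` from `e` first steps
to a neighbour `x` of `e`. If `x = v₁`, what remains is a walk of the same kind along the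
shorter path. Otherwise `x` is not on the path, so `x` is at distance `n + 1` from `o` in the
tree, and exactly one walk of that length is left, namely the path itself. The count therefore
grows by `deg e - 1` at each step, and so does the number of edges meeting the path: adding `e`
contributes its `deg e` edges, of which only `e v₁` was already counted. Running the same
recursion mod 2 gives the parity statement.
-/

open Finset SimpleGraph Walk

namespace SimpleGraph

variable {V : Type*} {G : SimpleGraph V}

section LocallyFinite

variable [DecidableEq V] [LocallyFinite G]

namespace Walk

def incidentEdgeFinset {u v : V} (p : G.Walk u v) : Finset (Sym2 V) :=
  p.support.toFinset.biUnion fun x ↦ G.incidenceFinset x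

theorem mem_incidentEdgeFinset {u v : V} {p : G.Walk u v} {ed : Sym2 V} :
    ed ∈ p.incidentEdgeFinset ↔ ed ∈ G.edgeSet ∧ ∃ x ∈ p.support, x ∈ ed := by
  simp only [incidentEdgeFinset, mem_biUnion, List.mem_toFinset, mem_incidenceFinset]
  grind [incidenceSet]

@[simp]
theorem incidentEdgeFinset_nil {u : V} :
    (nil : G.Walk u u).incidentEdgeFinset = G.incidenceFinset u := by
  simp [incidentEdgeFinset]

@[simp]
theorem incidentEdgeFinset_cons {u v w : V} (h : G.Adj u v) (q : G.Walk v w) :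
    (cons h q).incidentEdgeFinset = G.incidenceFinset u ∪ q.incidentEdgeFinset := by
  simp [incidentEdgeFinset, biUnion_insert]

@[simp]
theorem incidentEdgeFinset_reverse {u v : V} (p : G.Walk u v) :
    p.reverse.incidentEdgeFinset = p.incidentEdgeFinset := by
  simp [incidentEdgeFinset]

end Walk

namespace IsAcyclic

/-- The only edge at `u` reaching the rest of a path `u, v, …` is the first one: any other
neighbour on the path would close a cycle. -/
theorem incidenceFinset_inter_incidentEdgeFinset (hG : G.IsAcyclic) {u v w : V}
    {h : G.Adj u v} {q : G.Walk v w} (hp : (cons h q).IsPath) :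
    G.incidenceFinset u ∩ q.incidentEdgeFinset = {s(u, v)} := by
  ext ed
  simp only [mem_inter, mem_incidenceFinset, mem_incidentEdgeFinset, mem_singleton]
  constructor
  · rintro ⟨⟨hed, hu⟩, -, x, hx, hxed⟩
    obtain ⟨y, rfl⟩ := Sym2.mem_iff_exists.mp hu
    rcases Sym2.mem_iff.mp hxed with rfl | rfl
    · exact absurd hx ((cons_isPath_iff h q).mp hp).2
    · have hxv : x = v := by
        simpa using hG.eq_snd_of_adj_start hp (hed : G.Adj u x) (List.mem_cons_of_mem _ hx)
      rw [hxv]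
  · rintro rfl
    exact ⟨⟨h, Sym2.mem_mk_left u v⟩, h, v, q.start_mem_support, Sym2.mem_mk_right u v⟩

theorem card_incidentEdgeFinset_cons (hG : G.IsAcyclic) {u v w : V} {h : G.Adj u v}
    {q : G.Walk v w} (hp : (cons h q).IsPath) :
    #(cons h q).incidentEdgeFinset + 1 = #q.incidentEdgeFinset + G.degree u := by
  rw [incidentEdgeFinset_cons, ← card_incidenceFinset_eq_degree, ← card_singleton s(u, v),
    ← hG.incidenceFinset_inter_incidentEdgeFinset hp, card_union_add_card_inter, add_comm]

theorem odd_card_incidentEdgeFinset (hG : G.IsAcyclic) {u v : V} {p : G.Walk u v}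
    (hp : p.IsPath) (hodd : ∀ x ∈ p.support, Odd (G.degree x)) :
    Odd #p.incidentEdgeFinset := by
  induction p with
  | nil => simpa [card_incidenceFinset_eq_degree] using hodd _ (start_mem_support _)
  | @cons u v w h q ih =>
    have hcard := hG.card_incidentEdgeFinset_cons hp
    obtain ⟨a, ha⟩ := ih hp.of_cons fun x hx ↦ hodd x (List.mem_cons_of_mem _ hx)
    obtain ⟨b, hb⟩ := hodd u (start_mem_support _)
    exact ⟨a + b, by omega⟩

theorem even_card_incidentEdgeFinset (hG : G.IsAcyclic) {u v : V} {p : G.Walk u v}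
    (hp : p.IsPath) (hu : Even (G.degree u)) (hodd : ∀ x ∈ p.support, x ≠ u → Odd (G.degree x)) :
    Even #p.incidentEdgeFinset := by
  cases p with
  | nil => simpa [card_incidenceFinset_eq_degree] using hu
  | cons h q =>
    have hcard := hG.card_incidentEdgeFinset_cons hp
    have hq := (cons_isPath_iff h q).mp hp
    obtain ⟨a, ha⟩ := hG.odd_card_incidentEdgeFinset hq.1 fun x hx ↦
      hodd x (List.mem_cons_of_mem _ hx) (ne_of_mem_of_not_mem hx hq.2)
    obtain ⟨b, hb⟩ := hu
    exact ⟨a + b, by omega⟩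

theorem card_walk_length_eq_one (hG : G.IsAcyclic) {u v : V} {q : G.Walk u v} (hq : q.IsPath) :
    Fintype.card {w : G.Walk u v // w.length = q.length} = 1 := by
  refine Fintype.card_eq_one_iff.mpr ⟨⟨q, rfl⟩, fun ⟨w, hw⟩ ↦ Subtype.ext ?_⟩
  have hbypass : w.bypass = q :=
    congrArg Subtype.val ((hG.subsingleton_path u v).elim ⟨_, w.bypass_isPath⟩ ⟨q, hq⟩)
  show w = q
  rw [← hbypass, w.bypass_eq_self_of_length_le_length_bypass (by rw [hbypass, hw])]

end IsAcyclic

end LocallyFinite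

section Fintype

variable [Fintype V] [DecidableEq V] [DecidableRel G.Adj]

theorem card_walk_length_succ (u v : V) (n : ℕ) :
    Fintype.card {w : G.Walk u v // w.length = n + 1} =
      ∑ x ∈ G.neighborFinset u, Fintype.card {w : G.Walk x v // w.length = n} := by
  have hwalks := G.adjMatrix_pow_apply_eq_card_walk (α := ℕ)
  have hsucc := hwalks (n + 1) u v
  rw [pow_succ', adjMatrix_mul_apply] at hsucc
  simp only [hwalks] at hsucc
  exact hsucc.symm

theorem IsAcyclic.card_walk_length_add_two (hG : G.IsAcyclic) {u v : V} {p : G.Walk u v} (hp : p.IsPath) :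
    Fintype.card {w : G.Walk u v // w.length = p.length + 2} = #p.incidentEdgeFinset := by
  induction p with
  | @nil u =>
    rw [incidentEdgeFinset_nil, card_incidenceFinset_eq_degree, ← card_neighborFinset_eq_degree,
      card_eq_sum_ones]
    refine (card_walk_length_succ (G := G) u u 1).trans (sum_congr rfl fun x hx ↦ ?_)
    exact hG.card_walk_length_eq_one (Path.singleton ((G.mem_neighborFinset u x).mp hx).symm).isPath
  | @cons u v w h q ih =>
    have hv : v ∈ G.neighborFinset u := (G.mem_neighborFinset u v).mpr h
    have hdetour : ∀ x ∈ (G.neighborFinset u).erase v,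
        Fintype.card {w' : G.Walk x w // w'.length = q.length + 2} = 1 := by
      intro x hx
      obtain ⟨hxv, hxN⟩ := mem_erase.mp hx
      have hxu := (G.mem_neighborFinset u x).mp hxN
      refine hG.card_walk_length_eq_one (hp.cons (fun hxp ↦ hxv ?_) (h := hxu.symm))
      simpa using hG.eq_snd_of_adj_start hp hxu hxp
    have hcard := hG.card_incidentEdgeFinset_cons hp
    have hdeg : 0 < G.degree u := (G.degree_pos_iff_exists_adj u).mpr ⟨v, h⟩
    rw [show (cons h q).length + 2 = q.length + 2 + 1 from rfl, card_walk_length_succ,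
      ← add_sum_erase _ _ hv, ih hp.of_cons, sum_congr rfl hdetour, sum_const, smul_eq_mul,
      mul_one, card_erase_of_mem hv, card_neighborFinset_eq_degree]
    omega

end Fintype

end SimpleGraph

/-- In a tree, the number of walks of length ℓ from e to o, where o is at distance
ℓ - 2 from e, equals the number of edges incident to at least one vertex of the
path from o to e; in particular, if all vertices of that path except e have odd
degree and e has even degree, then this number of walks is even. -/
theorem stmt16 {V : Type} [Fintype V] [DecidableEq V] (G : SimpleGraph V)
    [DecidableRel G.Adj] (htree : G.IsTree) (e o : V) (ℓ : ℕ)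
    (p : G.Walk o e) (hp : p.IsPath) (hlen : p.length + 2 = ℓ) :
    Nat.card {w : G.Walk e o // w.length = ℓ} =
      Nat.card {ed : Sym2 V // ed ∈ G.edgeSet ∧ ∃ v ∈ p.support, v ∈ ed} ∧
    ((∀ v ∈ p.support, v ≠ e → Odd (G.degree v)) → Even (G.degree e) →
      Even (Nat.card {w : G.Walk e o // w.length = ℓ})) := by
  subst hlen
  have hG := htree.isAcyclic
  have hwalks : Nat.card {w : G.Walk e o // w.length = p.length + 2} = #p.incidentEdgeFinset := by
    rw [Nat.card_eq_fintype_card, ← p.length_reverse, hG.card_walk_length_add_two hp.reverse,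
      incidentEdgeFinset_reverse]
  have hedges : Nat.card {ed : Sym2 V // ed ∈ G.edgeSet ∧ ∃ v ∈ p.support, v ∈ ed} =
      #p.incidentEdgeFinset :=
    Nat.subtype_card _ fun _ ↦ mem_incidentEdgeFinset
  refine ⟨hwalks.trans hedges.symm, fun hodd heven ↦ ?_⟩
  rw [hwalks, ← incidentEdgeFinset_reverse]
  exact hG.even_card_incidentEdgeFinset hp.reverse heven (by simpa using hodd)
end
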